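/- Let n, m, r be natural numbers with m < n and r + n + 1 ≤ 2m. Let γ, δ be partial bijections of Fin n with r + 1 ≤ rank(γ) ≤ m and r + 1 ≤ rank(δ) ≤ m, and rank(γ·δ) = r. Then there exist partial bijections α, β of Fin n, each of rank r + 1, such that α·β = γ·δ and, in the free semigroup on the alphabet X = {μ ∈ I_n : r + 1 ≤ rank(μ) ≤ m}, the pair (x_γ·x_δ, x_α·x_β) lies in the congruence generated by R = {(x_μ·x_ν, x_{μν}) : r + 1 ≤ rank(μ), rank(ν), rank(μ·ν) ≤ m}. -/

import Mathlib

/-- The symmetric inverse monoid on `Fin n`: partial bijections under composition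
(`α * β` means "first apply `α`, then `β`"). -/
instance (n : ℕ) : Semigroup (PEquiv (Fin n) (Fin n)) where
  mul := PEquiv.trans
  mul_assoc a b c := by
    show (a.trans b).trans c = a.trans (b.trans c)
    ext x y
    simp [PEquiv.trans, Option.bind_assoc]

/-- The rank of a partial bijection: the cardinality of its domain. -/
noncomputable def prank {n : ℕ} (a : PEquiv (Fin n) (Fin n)) : ℕ :=
  Set.ncard {x : Fin n | (a x).isSome}

/-- The alphabet `X_{i,m}`: partial bijections `a` with `i ≤ rank a ≤ m`. -/
abbrev IX (n m i : ℕ) : Type :=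
  {a : PEquiv (Fin n) (Fin n) // i ≤ prank a ∧ prank a ≤ m}

/-- The relations `R_{i,m}` of the restricted Cayley table presentation. -/
def IRel (n m i : ℕ) : FreeSemigroup (IX n m i) → FreeSemigroup (IX n m i) → Prop :=
  fun u v =>
    ∃ (a b : PEquiv (Fin n) (Fin n)) (ha : i ≤ prank a ∧ prank a ≤ m)
      (hb : i ≤ prank b ∧ prank b ≤ m) (hab : i ≤ prank (a * b) ∧ prank (a * b) ≤ m),
      u = FreeSemigroup.of (⟨a, ha⟩ : IX n m i) * FreeSemigroup.of ⟨b, hb⟩ ∧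
      v = FreeSemigroup.of ⟨a * b, hab⟩

/-! Write `A` for the image of `γ` and `B` for the domain of `δ`, so `|A ∩ B| = r`; hence there
are `e ∈ A \ B` and `c ∈ B \ A`, and inclusion–exclusion with `r + n + 1 ≤ 2m` gives
`|A| < m` or `|B| < m`. Partial identities `ε_S = ofSet S` with `r + 1 ≤ |S| ≤ m` are letters,
and the relations `x_a x_ε = x_{aε}`, `x_ε x_d = x_{εd}` let such a factor be moved across the
middle of a product. If `|B| < m`, take `S = B ∪ {e}` and `T = (A ∩ B) ∪ {e, c}`:
`x_γ x_δ = x_γ x_{ε_S δ} ~ x_{γ ε_S} x_δ = x_{γ ε_S ε_T} x_δ ~ x_{γ ε_S} x_{ε_T δ}`,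
and both new factors have rank `r + 1`. The case `|A| < m` is the mirror image. -/

open Set

namespace PEquiv

variable {α β γ : Type*}

-- The image of `f` is `f.symm.dom`.
def dom (f : α ≃. β) : Set α := {a | (f a).isSome}

lemma mem_dom_iff {f : α ≃. β} {a : α} : a ∈ f.dom ↔ ∃ b, f a = some b :=
  Option.isSome_iff_exists

lemma mem_dom_trans_iff {f : α ≃. β} {g : β ≃. γ} {a : α} :
    a ∈ (f.trans g).dom ↔ ∃ b ∈ g.dom, f a = some b := by
  simp only [mem_dom_iff, trans_eq_some]
  aesop

lemma ncard_dom_trans (f : α ≃. β) (g : β ≃. γ) :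
    (f.trans g).dom.ncard = (f.symm.dom ∩ g.dom).ncard := by
  refine ncard_congr (fun a ha => (f a).get (Option.isSome_of_isSome_bind ha)) ?_ ?_ ?_
  · intro a ha
    obtain ⟨b, hb, hab⟩ := mem_dom_trans_iff.mp ha
    simp only [hab, Option.get_some]
    exact ⟨mem_dom_iff.mpr ⟨a, f.eq_some_iff.mpr hab⟩, hb⟩
  · intro a₁ a₂ h₁ h₂ h
    obtain ⟨b₁, -, hab₁⟩ := mem_dom_trans_iff.mp h₁
    obtain ⟨b₂, -, hab₂⟩ := mem_dom_trans_iff.mp h₂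
    simp only [hab₁, hab₂, Option.get_some] at h
    subst h
    exact f.inj hab₁ hab₂
  · rintro b ⟨hb, hbg⟩
    obtain ⟨a, ha⟩ := mem_dom_iff.mp hb
    have hab : f a = some b := f.eq_some_iff.mp ha
    exact ⟨a, mem_dom_trans_iff.mpr ⟨b, hbg, hab⟩, by simp only [hab, Option.get_some]⟩

lemma dom_refl : (PEquiv.refl α).dom = univ := by
  ext; simp [dom]

lemma ncard_dom_symm (f : α ≃. β) : f.symm.dom.ncard = f.dom.ncard := by
  simpa [trans_refl, dom_refl] using (ncard_dom_trans f (PEquiv.refl β)).symm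

lemma dom_ofSet (s : Set α) [DecidablePred (· ∈ s)] : (ofSet s).dom = s := by
  ext a; simp [dom, ofSet]

lemma dom_ofSet_trans (s : Set α) [DecidablePred (· ∈ s)] (f : α ≃. β) :
    ((ofSet s).trans f).dom = s ∩ f.dom := by
  ext a; by_cases h : a ∈ s <;> simp [dom, PEquiv.trans, ofSet, h]

lemma dom_symm_trans_ofSet (f : α ≃. β) (s : Set β) [DecidablePred (· ∈ s)] :
    (f.trans (ofSet s)).symm.dom = f.symm.dom ∩ s := by
  rw [symm_trans_rev, ofSet_symm, dom_ofSet_trans, inter_comm]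

lemma trans_ofSet_of_subset {f : α ≃. β} {s : Set β} [DecidablePred (· ∈ s)]
    (h : f.symm.dom ⊆ s) : f.trans (ofSet s) = f := by
  ext a b
  rw [trans_eq_some]
  constructor
  · rintro ⟨c, hac, hcb⟩
    rw [ofSet_eq_some_iff] at hcb
    exact hcb.1 ▸ hac
  · intro hab
    have hb : b ∈ s := h (mem_dom_iff.mpr ⟨a, f.eq_some_iff.mpr hab⟩)
    exact ⟨b, hab, ofSet_eq_some_iff.mpr ⟨rfl, hb⟩⟩

lemma ofSet_trans_of_subset {f : α ≃. β} {s : Set α} [DecidablePred (· ∈ s)]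
    (h : f.dom ⊆ s) : (ofSet s).trans f = f := by
  rw [← symm_symm ((ofSet s).trans f), symm_trans_rev, ofSet_symm, trans_ofSet_of_subset h,
    symm_symm]

end PEquiv

section SymmetricInverseMonoid

open PEquiv

variable {n : ℕ}

lemma prank_mul (a b : PEquiv (Fin n) (Fin n)) : prank (a * b) = (a.symm.dom ∩ b.dom).ncard :=
  ncard_dom_trans a b

lemma ncard_dom_symm_eq_prank (a : PEquiv (Fin n) (Fin n)) : a.symm.dom.ncard = prank a :=
  ncard_dom_symm a

lemma prank_ofSet (s : Set (Fin n)) [DecidablePred (· ∈ s)] : prank (ofSet s) = s.ncard :=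
  congrArg ncard (dom_ofSet s)

end SymmetricInverseMonoid

section Presentation

open FreeSemigroup

variable {n m i : ℕ}

lemma iRel_of_mul_eq {a b c : IX n m i} (h : a.1 * b.1 = c.1) :
    IRel n m i (of a * of b) (of c) := by
  obtain ⟨c, hc⟩ := c
  subst h
  exact ⟨a.1, b.1, a.2, b.2, hc, rfl, rfl⟩

lemma conGen_iRel_of_mul_eq {a e d a' d' : IX n m i} (hae : a.1 * e.1 = a'.1)
    (hed : e.1 * d.1 = d'.1) : conGen (IRel n m i) (of a' * of d) (of a * of d') := by
  set c := conGen (IRel n m i)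
  have h₁ : c (of a' * of d) (of a * of e * of d) :=
    c.mul (Con.le_conGen _ _ (iRel_of_mul_eq hae)).symm (c.refl _)
  have h₂ : c (of a * (of e * of d)) (of a * of d') :=
    c.mul (c.refl _) (Con.le_conGen _ _ (iRel_of_mul_eq hed))
  exact h₁.trans (mul_assoc (of a) (of e) (of d) ▸ h₂)

end Presentation

section Reduction

open PEquiv FreeSemigroup

variable {n m r : ℕ}

lemma exists_mem_dom_symm_notMem_dom {a b : PEquiv (Fin n) (Fin n)}
    (h : prank (a * b) < prank a) :
    ∃ e ∈ a.symm.dom, e ∉ b.dom := by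
  rw [prank_mul, ← ncard_dom_symm_eq_prank] at h
  obtain ⟨e, he, heab⟩ := exists_mem_notMem_of_ncard_lt_ncard h
  exact ⟨e, he, fun heb => heab ⟨he, heb⟩⟩

lemma exists_mem_dom_notMem_dom_symm {a b : PEquiv (Fin n) (Fin n)}
    (h : prank (a * b) < prank b) :
    ∃ c ∈ b.dom, c ∉ a.symm.dom := by
  rw [prank_mul] at h
  obtain ⟨c, hc, hcab⟩ := exists_mem_notMem_of_ncard_lt_ncard h
  exact ⟨c, hc, fun hca => hcab ⟨hca, hc⟩⟩

lemma exists_rank_succ_factorization_of_prank_right_lt (γ δ : IX n m (r + 1))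
    (hrank : prank (γ.1 * δ.1) = r) (hδ : prank δ.1 + 1 ≤ m) :
    ∃ α β : IX n m (r + 1), prank α.1 = r + 1 ∧ prank β.1 = r + 1 ∧ α.1 * β.1 = γ.1 * δ.1 ∧
      conGen (IRel n m (r + 1)) (of γ * of δ) (of α * of β) := by
  classical
  obtain ⟨e, heA, heB⟩ := exists_mem_dom_symm_notMem_dom (a := γ.1) (b := δ.1) (by omega)
  obtain ⟨c, hcB, hcA⟩ := exists_mem_dom_notMem_dom_symm (a := γ.1) (b := δ.1) (by omega)
  set A := γ.1.symm.dom
  set B := δ.1.dom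
  set S := insert e B
  set T := insert c (insert e (A ∩ B))
  rw [prank_mul] at hrank
  have hS : prank (ofSet S) = prank δ.1 + 1 := by
    rw [prank_ofSet]
    exact ncard_insert_of_notMem heB
  have hT : prank (ofSet T) = r + 2 := by
    rw [prank_ofSet, ncard_insert_of_notMem (by grind), ncard_insert_of_notMem (by grind), hrank]
  have hα : prank (γ.1 * ofSet S) = r + 1 := by
    rw [prank_mul, dom_ofSet, inter_insert_of_mem heA, ncard_insert_of_notMem (by grind), hrank]
  have hβ : prank (ofSet T * δ.1) = r + 1 := by
    rw [prank_mul, ofSet_symm, dom_ofSet, show T ∩ B = insert c (A ∩ B) by grind,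
      ncard_insert_of_notMem (by grind), hrank]
  have hδr := δ.2.1
  let ε : IX n m (r + 1) := ⟨ofSet S, by omega⟩
  let ε' : IX n m (r + 1) := ⟨ofSet T, by omega⟩
  let α : IX n m (r + 1) := ⟨γ.1 * ofSet S, by omega⟩
  let β : IX n m (r + 1) := ⟨ofSet T * δ.1, by omega⟩
  have hεδ : ε.1 * δ.1 = δ.1 := ofSet_trans_of_subset (subset_insert e B)
  have hαε' : α.1 * ε'.1 = α.1 :=
    trans_ofSet_of_subset ((dom_symm_trans_ofSet γ.1 S).trans_subset (by grind))
  refine ⟨α, β, hα, hβ, ?_,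
    (conGen_iRel_of_mul_eq rfl hεδ).symm.trans (conGen_iRel_of_mul_eq hαε' rfl)⟩
  calc α.1 * β.1 = α.1 * ε'.1 * δ.1 := (mul_assoc _ _ _).symm
    _ = γ.1 * (ε.1 * δ.1) := by rw [hαε', mul_assoc]
    _ = γ.1 * δ.1 := by rw [hεδ]

lemma exists_rank_succ_factorization_of_prank_left_lt (γ δ : IX n m (r + 1))
    (hrank : prank (γ.1 * δ.1) = r) (hγ : prank γ.1 + 1 ≤ m) :
    ∃ α β : IX n m (r + 1), prank α.1 = r + 1 ∧ prank β.1 = r + 1 ∧ α.1 * β.1 = γ.1 * δ.1 ∧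
      conGen (IRel n m (r + 1)) (of γ * of δ) (of α * of β) := by
  classical
  obtain ⟨e, heA, heB⟩ := exists_mem_dom_symm_notMem_dom (a := γ.1) (b := δ.1) (by omega)
  obtain ⟨c, hcB, hcA⟩ := exists_mem_dom_notMem_dom_symm (a := γ.1) (b := δ.1) (by omega)
  set A := γ.1.symm.dom
  set B := δ.1.dom
  set S := insert c A
  set T := insert e (insert c (A ∩ B))
  rw [prank_mul] at hrank
  have hS : prank (ofSet S) = prank γ.1 + 1 := by
    rw [prank_ofSet, ← ncard_dom_symm_eq_prank]
    exact ncard_insert_of_notMem hcA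
  have hT : prank (ofSet T) = r + 2 := by
    rw [prank_ofSet, ncard_insert_of_notMem (by grind), ncard_insert_of_notMem (by grind), hrank]
  have hα : prank (γ.1 * ofSet T) = r + 1 := by
    rw [prank_mul, dom_ofSet, show A ∩ T = insert e (A ∩ B) by grind,
      ncard_insert_of_notMem (by grind), hrank]
  have hβ : prank (ofSet S * δ.1) = r + 1 := by
    rw [prank_mul, ofSet_symm, dom_ofSet, insert_inter_of_mem hcB,
      ncard_insert_of_notMem (by grind), hrank]
  have hγr := γ.2.1
  let ε : IX n m (r + 1) := ⟨ofSet S, by omega⟩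
  let ε' : IX n m (r + 1) := ⟨ofSet T, by omega⟩
  let α : IX n m (r + 1) := ⟨γ.1 * ofSet T, by omega⟩
  let β : IX n m (r + 1) := ⟨ofSet S * δ.1, by omega⟩
  have hγε : γ.1 * ε.1 = γ.1 := trans_ofSet_of_subset (subset_insert c A)
  have hε'β : ε'.1 * β.1 = β.1 :=
    ofSet_trans_of_subset ((dom_ofSet_trans S δ.1).trans_subset (by grind))
  refine ⟨α, β, hα, hβ, ?_,
    (conGen_iRel_of_mul_eq hγε rfl).trans (conGen_iRel_of_mul_eq rfl hε'β).symm⟩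
  calc α.1 * β.1 = γ.1 * (ε'.1 * β.1) := mul_assoc _ _ _
    _ = γ.1 * ε.1 * δ.1 := by rw [hε'β, mul_assoc]
    _ = γ.1 * δ.1 := by rw [hγε]

end Reduction

theorem stmt_12_general (n m r : ℕ) (hr : r + n + 1 ≤ 2 * m)
    (γ δ : PEquiv (Fin n) (Fin n))
    (hγ₁ : r + 1 ≤ prank γ) (hγ₂ : prank γ ≤ m)
    (hδ₁ : r + 1 ≤ prank δ) (hδ₂ : prank δ ≤ m)
    (hrank : prank (γ * δ) = r) :
    ∃ α β : IX n m (r + 1), prank α.val = r + 1 ∧ prank β.val = r + 1 ∧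
      α.val * β.val = γ * δ ∧
      conGen (IRel n m (r + 1))
        (FreeSemigroup.of (⟨γ, ⟨hγ₁, hγ₂⟩⟩ : IX n m (r + 1)) *
          FreeSemigroup.of (⟨δ, ⟨hδ₁, hδ₂⟩⟩ : IX n m (r + 1)))
        (FreeSemigroup.of α * FreeSemigroup.of β) := by
  have hunion : (γ.symm.dom ∪ δ.dom).ncard ≤ n :=
    (Set.ncard_le_card _).trans_eq (Nat.card_fin n)
  have hincl : (γ.symm.dom ∪ δ.dom).ncard + r = prank γ + prank δ := by
    rw [← hrank, prank_mul, ← ncard_dom_symm_eq_prank]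
    exact Set.ncard_union_add_ncard_inter _ _
  rcases (by omega : prank δ + 1 ≤ m ∨ prank γ + 1 ≤ m) with hδ | hγ
  · exact exists_rank_succ_factorization_of_prank_right_lt ⟨γ, hγ₁, hγ₂⟩ ⟨δ, hδ₁, hδ₂⟩
      hrank hδ
  · exact exists_rank_succ_factorization_of_prank_left_lt ⟨γ, hγ₁, hγ₂⟩ ⟨δ, hδ₁, hδ₂⟩
      hrank hγ

/-- In the symmetric inverse monoid, if `r + 1 ≤ rank γ, rank δ ≤ m` and `rank (γδ) = r`,
then there are `α, β` of rank `r + 1` with `αβ = γδ` such that `x_γ x_δ = x_α x_β` is a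
consequence of the Cayley relations among elements of rank between `r + 1` and `m`
(assuming `m < n` and `r + n + 1 ≤ 2m`). -/
theorem stmt_12 (n m r : ℕ) (hm : m < n) (hr : r + n + 1 ≤ 2 * m)
    (γ δ : PEquiv (Fin n) (Fin n))
    (hγ₁ : r + 1 ≤ prank γ) (hγ₂ : prank γ ≤ m)
    (hδ₁ : r + 1 ≤ prank δ) (hδ₂ : prank δ ≤ m)
    (hrank : prank (γ * δ) = r) :
    ∃ α β : IX n m (r + 1), prank α.val = r + 1 ∧ prank β.val = r + 1 ∧
      α.val * β.val = γ * δ ∧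
      conGen (IRel n m (r + 1))
        (FreeSemigroup.of (⟨γ, ⟨hγ₁, hγ₂⟩⟩ : IX n m (r + 1)) *
          FreeSemigroup.of (⟨δ, ⟨hδ₁, hδ₂⟩⟩ : IX n m (r + 1)))
        (FreeSemigroup.of α * FreeSemigroup.of β) :=
  stmt_12_general n m r hr γ δ hγ₁ hγ₂ hδ₁ hδ₂ hrank
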